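/- arXiv:1908.01662 — 4 statements merged into one kernel-verified Lean document; each statement's English description precedes it below -/
import Mathlib

section
/- Suppose parabolas f_p and f_q (p ≠ q, α > 0) both attain the upper envelope on adjacent intervals: there exist σ₁ < s < σ₃ such that f_p(x) = max over all grid points r of f_r(x) for x ∈ (σ₁, s] and f_q(x) equals this maximum for x ∈ (s, σ₃]. Then p > q. -/
theorem stmt_4 (α β : ℝ) (hα : 0 < α) (S : Finset ℝ) (I : ℝ → ℝ)
    (f : ℝ → ℝ → ℝ)
    (hf : ∀ p x, f p x = I p + α * (p - x) ^ 2 + β * (p - x))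
    (hS : S.Nonempty)
    (p q : ℝ) (hp : p ∈ S) (hq : q ∈ S) (hpq : p ≠ q)
    (σ₁ s σ₃ : ℝ) (h₁ : σ₁ < s) (h₂ : s < σ₃)
    (hup : ∀ x ∈ Set.Ioc σ₁ s, f p x = S.sup' hS (fun r => f r x))
    (huq : ∀ x ∈ Set.Ioc s σ₃, f q x = S.sup' hS (fun r => f r x)) :
    q < p := by
  have hs : f p s = S.sup' hS (fun r => f r s) := hup s ⟨h₁, le_refl s⟩
  have hs3 : f q σ₃ = S.sup' hS (fun r => f r σ₃) := huq σ₃ ⟨h₂, le_refl σ₃⟩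
  have hqs : f q s ≤ f p s := hs ▸ Finset.le_sup' (fun r => f r s) hq
  have hps : f p σ₃ ≤ f q σ₃ := hs3 ▸ Finset.le_sup' (fun r => f r σ₃) hp
  rw [hf, hf] at hqs hps
  rcases lt_or_gt_of_ne hpq with h | h
  · nlinarith [mul_pos hα (mul_pos (sub_pos.2 h₂) (sub_pos.2 h))]
  · exact h
end

section
/- Every parabola in the family attains the upper envelope somewhere once we allow the whole real line: for α > 0, a finite set S, and any p ∈ S that is either the minimum or maximum of S, there exists x ∈ ℝ with f_p(x) = max_{r ∈ S} f_r(x). More strongly, for any p ∈ S considered against only the grid points r ≤ p (i.e., S' = {r ∈ S : r ≤ p}), there exists x with f_p(x) = max_{r ∈ S'} f_r(x): the newest (largest) grid point always joins the upper envelope of the points seen so far. -/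
open Filter

lemma key_bot (α β : ℝ) (hα : 0 < α) (I : ℝ → ℝ) (f : ℝ → ℝ → ℝ)
    (hf : ∀ p x, f p x = I p + α * (p - x) ^ 2 + β * (p - x))
    (p r : ℝ) (h : r ≤ p) : ∀ᶠ x in atBot, f r x ≤ f p x := by
  rcases eq_or_lt_of_le h with rfl | hlt
  · exact Eventually.of_forall fun x => le_refl _
  · set A := I p - I r + α * (p^2 - r^2) + β * (p - r) with hA
    have hpr : 0 < p - r := sub_pos.2 hlt
    have hc : 0 < 2 * α * (p - r) := by positivity
    filter_upwards [eventually_le_atBot (A / (2 * α * (p - r)))] with x hx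
    rw [hf, hf]
    rw [le_div_iff₀ hc] at hx
    nlinarith [hx]

lemma key_top (α β : ℝ) (hα : 0 < α) (I : ℝ → ℝ) (f : ℝ → ℝ → ℝ)
    (hf : ∀ p x, f p x = I p + α * (p - x) ^ 2 + β * (p - x))
    (p r : ℝ) (h : p ≤ r) : ∀ᶠ x in atTop, f r x ≤ f p x := by
  rcases eq_or_lt_of_le h with rfl | hlt
  · exact Eventually.of_forall fun x => le_refl _
  · set A := I p - I r + α * (p^2 - r^2) + β * (p - r) with hA
    have hc : 2 * α * (p - r) < 0 := by nlinarith
    filter_upwards [eventually_ge_atTop (A / (2 * α * (p - r)))] with x hx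
    rw [hf, hf]
    rw [div_le_iff_of_neg hc] at hx
    nlinarith [hx]

theorem stmt_8 (α β : ℝ) (hα : 0 < α) (S : Finset ℝ) (hS : S.Nonempty) (I : ℝ → ℝ)
    (f : ℝ → ℝ → ℝ)
    (hf : ∀ p x, f p x = I p + α * (p - x) ^ 2 + β * (p - x))
    (p : ℝ) (hp : p ∈ S) :
    ((p = S.min' hS ∨ p = S.max' hS) →
      ∃ x : ℝ, f p x = S.sup' hS (fun r => f r x)) ∧
    ∃ x : ℝ, f p x =
      (S.filter (fun r => r ≤ p)).sup' ⟨p, Finset.mem_filter.2 ⟨hp, le_refl p⟩⟩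
        (fun r => f r x) := by
  constructor
  · rintro (hmin | hmax)
    · have hall : ∀ᶠ x in atTop, ∀ r ∈ S, f r x ≤ f p x := by
        rw [Filter.eventually_all_finset]
        intro r hr
        exact key_top α β hα I f hf p r (hmin ▸ S.min'_le r hr)
      obtain ⟨x, hx⟩ := hall.exists
      exact ⟨x, le_antisymm (Finset.le_sup' (fun r => f r x) hp) (Finset.sup'_le _ _ hx)⟩
    · have hall : ∀ᶠ x in atBot, ∀ r ∈ S, f r x ≤ f p x := by
        rw [Filter.eventually_all_finset]
        intro r hr
        exact key_bot α β hα I f hf p r (hmax ▸ S.le_max' r hr)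
      obtain ⟨x, hx⟩ := hall.exists
      exact ⟨x, le_antisymm (Finset.le_sup' (fun r => f r x) hp) (Finset.sup'_le _ _ hx)⟩
  · have hall : ∀ᶠ x in atBot, ∀ r ∈ S.filter (fun r => r ≤ p), f r x ≤ f p x := by
      rw [Filter.eventually_all_finset]
      intro r hr
      exact key_bot α β hα I f hf p r (Finset.mem_filter.1 hr).2
    obtain ⟨x, hx⟩ := hall.exists
    exact ⟨x, le_antisymm (Finset.le_sup' (fun r => f r x) ((Finset.mem_filter.2 ⟨hp, le_refl p⟩ : p ∈ S.filter (fun r => r ≤ p))))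
      (Finset.sup'_le _ _ hx)⟩
end

section
/- Suppose α > 0 and p, q are grid points whose parabolas both attain the upper envelope on nonempty open intervals R_p and R_q respectively, with every point of R_q strictly less than every point of R_p (R_q lies entirely to the left of R_p). Then q > p. -/
theorem stmt_10 (α β : ℝ) (hα : 0 < α) (S : Finset ℝ) (hS : S.Nonempty) (I : ℝ → ℝ)
    (f : ℝ → ℝ → ℝ)
    (hf : ∀ p x, f p x = I p + α * (p - x) ^ 2 + β * (p - x))
    (p q : ℝ) (hp : p ∈ S) (hq : q ∈ S) (hpq : p ≠ q)
    (ap bp aq bq : ℝ) (hpI : ap < bp) (hqI : aq < bq)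
    (hup : ∀ x ∈ Set.Ioo ap bp, f p x = S.sup' hS (fun r => f r x))
    (huq : ∀ x ∈ Set.Ioo aq bq, f q x = S.sup' hS (fun r => f r x))
    (hord : bq ≤ ap) :
    p < q := by
  by_contra h
  push_neg at h
  have hqp : q < p := lt_of_le_of_ne h (Ne.symm hpq)
  set x := (ap + bp) / 2 with hxdef
  set y := (aq + bq) / 2 with hydef
  have hx : x ∈ Set.Ioo ap bp := ⟨by simp [hxdef]; linarith, by simp [hxdef]; linarith⟩
  have hy : y ∈ Set.Ioo aq bq := ⟨by simp [hydef]; linarith, by simp [hydef]; linarith⟩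
  have hyx : y < x := by
    have : y < bq := hy.2
    have : ap < x := hx.1
    linarith [hy.2, hx.1]
  have h1 : f q x ≤ f p x := by
    rw [hup x hx]
    exact Finset.le_sup' (fun r => f r x) hq
  have h2 : f p y ≤ f q y := by
    rw [huq y hy]
    exact Finset.le_sup' (fun r => f r y) hp
  rw [hf, hf] at h1 h2
  nlinarith [mul_pos hα (mul_pos (sub_pos.2 hqp) (sub_pos.2 hyx))]
end

section
/- For α > 0 and three grid points p < q < r, if s_{r,q} ≥ s_{q,p} (the intersection of f_r and f_q lies weakly to the right of the intersection of f_q and f_p), then f_q(x) ≤ max(f_p(x), f_r(x)) for all x; i.e., f_q never appears in the upper envelope of {f_p, f_q, f_r}. -/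
theorem stmt_18 (α β : ℝ) (hα : 0 < α) (I : ℝ → ℝ)
    (f : ℝ → ℝ → ℝ)
    (hf : ∀ t x, f t x = I t + α * (t - x) ^ 2 + β * (t - x))
    (p q r : ℝ) (hpq : p < q) (hqr : q < r)
    (s₁ s₂ : ℝ) (hs₁ : f q s₁ = f p s₁) (hs₂ : f r s₂ = f q s₂)
    (hss : s₁ ≤ s₂) :
    ∀ x : ℝ, f q x ≤ max (f p x) (f r x) := by
  intro x
  simp only [hf] at *
  rcases le_total x s₂ with h | h
  · exact le_max_of_le_right (by nlinarith [mul_pos hα (sub_pos.mpr hqr)])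
  · exact le_max_of_le_left (by nlinarith [mul_pos hα (sub_pos.mpr hpq), hss.trans h])
end
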